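/- In an infinite-horizon discounted two-player Markov game with rewards in $[-1,1]$, for any max-player policy $\mu$ and any two min-player policies $\nu, \nu'$, it holds that $|V^{\mu,\nu}(s_0) - V^{\mu,\nu'}(s_0)| \leq \frac{2}{1-\gamma}\, \mathbb{E}_{\mu,\nu}\big[\sum_{t=0}^\infty \gamma^t\, \mathrm{TV}(\nu(\cdot|s_t), \nu'(\cdot|s_t))\big]$. -/

import Mathlib

/-- A probability distribution on a finite set, as a function. -/
def IsDist {X : Type*} [Fintype X] (p : X → ℝ) : Prop :=
  (∀ x, 0 ≤ p x) ∧ ∑ x, p x = 1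

/-- One-step expectation operator under the policy pair `(μ, ν)`:
`(stepOp P μ ν f) s = E_{a∼μ(s), b∼ν(s), s'∼P(s,a,b)}[f s']`. -/
noncomputable def stepOp {S A B : Type*} [Fintype S] [Fintype A] [Fintype B]
    (P : S → A → B → S → ℝ) (μ : S → A → ℝ) (ν : S → B → ℝ) (f : S → ℝ) : S → ℝ :=
  fun s => ∑ a, ∑ b, μ s a * ν s b * ∑ s', P s a b s' * f s'

/-- Expected one-step reward under `(μ, ν)`. -/
noncomputable def rBar {S A B : Type*} [Fintype A] [Fintype B]
    (r : S → A → B → ℝ) (μ : S → A → ℝ) (ν : S → B → ℝ) : S → ℝ :=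
  fun s => ∑ a, ∑ b, μ s a * ν s b * r s a b

/-- Discounted value function `V^{μ,ν}(s) = E[∑ γ^t r(S_t,A_t,B_t) | S_0 = s]`. -/
noncomputable def Vval {S A B : Type*} [Fintype S] [Fintype A] [Fintype B] (γ : ℝ)
    (P : S → A → B → S → ℝ) (r : S → A → B → ℝ)
    (μ : S → A → ℝ) (ν : S → B → ℝ) : S → ℝ :=
  fun s => ∑' t : ℕ, γ ^ t * ((stepOp P μ ν)^[t] (rBar r μ ν)) s

/-- State-action value function `Q^{μ,ν}(s,a,b)`. -/
noncomputable def Qval {S A B : Type*} [Fintype S] [Fintype A] [Fintype B] (γ : ℝ)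
    (P : S → A → B → S → ℝ) (r : S → A → B → ℝ)
    (μ : S → A → ℝ) (ν : S → B → ℝ) : S → A → B → ℝ :=
  fun s a b => r s a b + γ * ∑ s', P s a b s' * Vval γ P r μ ν s'

open Finset Filter Topology

lemma mg_abs_expect_le {X : Type*} [Fintype X] {p : X → ℝ} (hp : IsDist p) {f : X → ℝ} {C : ℝ}
    (hf : ∀ x, |f x| ≤ C) : |∑ x, p x * f x| ≤ C := by
  calc |∑ x, p x * f x| ≤ ∑ x, |p x * f x| := Finset.abs_sum_le_sum_abs _ _
    _ ≤ ∑ x, p x * C := Finset.sum_le_sum fun x _ => by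
        rw [abs_mul, abs_of_nonneg (hp.1 x)]
        exact mul_le_mul_of_nonneg_left (hf x) (hp.1 x)
    _ = C := by rw [← Finset.sum_mul, hp.2, one_mul]

lemma mg_abs_expect2_le {X Y : Type*} [Fintype X] [Fintype Y] {p : X → ℝ} {q : Y → ℝ}
    (hp : IsDist p) (hq : IsDist q) {f : X → Y → ℝ} {C : ℝ}
    (hf : ∀ x y, |f x y| ≤ C) : |∑ x, ∑ y, p x * q y * f x y| ≤ C := by
  have key : ∀ x, (∑ y, p x * q y * f x y) = p x * ∑ y, q y * f x y := by
    intro x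
    rw [Finset.mul_sum]
    exact Finset.sum_congr rfl fun y _ => by ring
  simp_rw [key]
  exact mg_abs_expect_le hp fun x => mg_abs_expect_le hq (hf x)

lemma mg_expect2_diff_le {X Y : Type*} [Fintype X] [Fintype Y] {p : X → ℝ} {q q' : Y → ℝ}
    (hp : IsDist p) {f : X → Y → ℝ} {C : ℝ}
    (hf : ∀ x y, |f x y| ≤ C) :
    |(∑ x, ∑ y, p x * q y * f x y) - ∑ x, ∑ y, p x * q' y * f x y| ≤
      C * ∑ y, |q y - q' y| := by
  rw [← Finset.sum_sub_distrib]
  simp_rw [← Finset.sum_sub_distrib]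
  calc |∑ x, ∑ y, (p x * q y * f x y - p x * q' y * f x y)|
      ≤ ∑ x, ∑ y, |p x * q y * f x y - p x * q' y * f x y| :=
        (Finset.abs_sum_le_sum_abs _ _).trans
          (Finset.sum_le_sum fun x _ => Finset.abs_sum_le_sum_abs _ _)
    _ ≤ ∑ x, ∑ y, p x * (|q y - q' y| * C) := by
        refine Finset.sum_le_sum fun x _ => Finset.sum_le_sum fun y _ => ?_
        have h : p x * q y * f x y - p x * q' y * f x y = p x * ((q y - q' y) * f x y) := by ring
        rw [h, abs_mul, abs_of_nonneg (hp.1 x), abs_mul]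
        exact mul_le_mul_of_nonneg_left
          (mul_le_mul_of_nonneg_left (hf x y) (abs_nonneg _)) (hp.1 x)
    _ = C * ∑ y, |q y - q' y| := by
        simp_rw [← Finset.mul_sum]
        rw [← Finset.sum_mul, hp.2, one_mul, ← Finset.sum_mul, mul_comm]

section stepOpLemmas
variable {S A B : Type*} [Fintype S] [Fintype A] [Fintype B]
variable (P : S → A → B → S → ℝ) (μ : S → A → ℝ) (ν : S → B → ℝ)

lemma mg_stepOp_add (f g : S → ℝ) (s : S) :
    stepOp P μ ν (fun s => f s + g s) s = stepOp P μ ν f s + stepOp P μ ν g s := by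
  simp [stepOp, mul_add, Finset.sum_add_distrib]

lemma mg_stepOp_smul (c : ℝ) (f : S → ℝ) (s : S) :
    stepOp P μ ν (fun s => c * f s) s = c * stepOp P μ ν f s := by
  simp only [stepOp, Finset.mul_sum]
  refine Finset.sum_congr rfl fun a _ => Finset.sum_congr rfl fun b _ =>
    Finset.sum_congr rfl fun s' _ => by ring

lemma mg_stepOp_sub (f g : S → ℝ) (s : S) :
    stepOp P μ ν (fun s => f s - g s) s = stepOp P μ ν f s - stepOp P μ ν g s := by
  have : (fun s => f s - g s) = fun s => f s + (-1) * g s := by funext s; ring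
  rw [this, mg_stepOp_add, mg_stepOp_smul]; ring

lemma mg_stepOp_sum (n : ℕ) (c : ℕ → ℝ) (f : ℕ → S → ℝ) (s : S) :
    stepOp P μ ν (fun s => ∑ t ∈ Finset.range n, c t * f t s) s
      = ∑ t ∈ Finset.range n, c t * stepOp P μ ν (f t) s := by
  induction n with
  | zero => simp [stepOp]
  | succ n ih =>
    simp only [Finset.sum_range_succ]
    rw [mg_stepOp_add P μ ν (fun s => ∑ t ∈ Finset.range n, c t * f t s)
      (fun s => c n * f n s), mg_stepOp_smul, ih]

variable {P μ ν}

lemma mg_stepOp_abs_le (hP : ∀ s a b, IsDist (P s a b)) (hμ : ∀ s, IsDist (μ s))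
    (hν : ∀ s, IsDist (ν s)) {f h : S → ℝ} (hfh : ∀ s, |f s| ≤ h s) (s : S) :
    |stepOp P μ ν f s| ≤ stepOp P μ ν h s := by
  simp only [stepOp]
  calc |∑ a, ∑ b, μ s a * ν s b * ∑ s', P s a b s' * f s'|
      ≤ ∑ a, ∑ b, |μ s a * ν s b * ∑ s', P s a b s' * f s'| :=
        (Finset.abs_sum_le_sum_abs _ _).trans
          (Finset.sum_le_sum fun a _ => Finset.abs_sum_le_sum_abs _ _)
    _ ≤ ∑ a, ∑ b, μ s a * ν s b * ∑ s', P s a b s' * h s' := by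
        refine Finset.sum_le_sum fun a _ => Finset.sum_le_sum fun b _ => ?_
        have hw : 0 ≤ μ s a * ν s b := mul_nonneg ((hμ s).1 a) ((hν s).1 b)
        rw [abs_mul, abs_of_nonneg hw]
        refine mul_le_mul_of_nonneg_left ?_ hw
        calc |∑ s', P s a b s' * f s'| ≤ ∑ s', |P s a b s' * f s'| :=
              Finset.abs_sum_le_sum_abs _ _
          _ ≤ ∑ s', P s a b s' * h s' := Finset.sum_le_sum fun s' _ => by
              rw [abs_mul, abs_of_nonneg ((hP s a b).1 s')]
              exact mul_le_mul_of_nonneg_left (hfh s') ((hP s a b).1 s')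

lemma mg_stepOp_abs_le_const (hP : ∀ s a b, IsDist (P s a b)) (hμ : ∀ s, IsDist (μ s))
    (hν : ∀ s, IsDist (ν s)) {f : S → ℝ} {C : ℝ} (hf : ∀ s, |f s| ≤ C) (s : S) :
    |stepOp P μ ν f s| ≤ C := by
  apply mg_abs_expect2_le (hμ s) (hν s)
  intro a b
  exact mg_abs_expect_le (hP s a b) hf

lemma mg_iter_abs_le (hP : ∀ s a b, IsDist (P s a b)) (hμ : ∀ s, IsDist (μ s))
    (hν : ∀ s, IsDist (ν s)) {C : ℝ} (t : ℕ) :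
    ∀ {f : S → ℝ}, (∀ s, |f s| ≤ C) → ∀ s, |((stepOp P μ ν)^[t] f) s| ≤ C := by
  induction t with
  | zero => intro f hf s; exact hf s
  | succ t ih =>
    intro f hf s
    rw [Function.iterate_succ_apply]
    exact ih (fun s => mg_stepOp_abs_le_const hP hμ hν hf s) s

lemma mg_stepOp_nonneg (hP : ∀ s a b, IsDist (P s a b)) (hμ : ∀ s, IsDist (μ s))
    (hν : ∀ s, IsDist (ν s)) {f : S → ℝ} (hf : ∀ s, 0 ≤ f s) (s : S) :
    0 ≤ stepOp P μ ν f s := by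
  refine Finset.sum_nonneg fun a _ => Finset.sum_nonneg fun b _ => ?_
  exact mul_nonneg (mul_nonneg ((hμ s).1 a) ((hν s).1 b))
    (Finset.sum_nonneg fun s' _ => mul_nonneg ((hP s a b).1 s') (hf s'))

lemma mg_iter_nonneg (hP : ∀ s a b, IsDist (P s a b)) (hμ : ∀ s, IsDist (μ s))
    (hν : ∀ s, IsDist (ν s)) {f : S → ℝ} (hf : ∀ s, 0 ≤ f s) (t : ℕ) :
    ∀ s, 0 ≤ ((stepOp P μ ν)^[t] f) s := by
  induction t generalizing f with
  | zero => exact hf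
  | succ t ih =>
    intro s
    rw [Function.iterate_succ_apply]
    exact ih (fun s => mg_stepOp_nonneg hP hμ hν hf s) s

lemma mg_summable (hP : ∀ s a b, IsDist (P s a b)) (hμ : ∀ s, IsDist (μ s))
    (hν : ∀ s, IsDist (ν s)) {γ C : ℝ} (hγ0 : 0 ≤ γ) (hγ1 : γ < 1) (hC : 0 ≤ C)
    {f : S → ℝ} (hf : ∀ s, |f s| ≤ C) (s : S) :
    Summable (fun t : ℕ => γ ^ t * ((stepOp P μ ν)^[t] f) s) := by
  apply Summable.of_norm_bounded (g := fun t : ℕ => C * γ ^ t)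
    ((summable_geometric_of_lt_one hγ0 hγ1).mul_left C)
  intro t
  rw [Real.norm_eq_abs, abs_mul, abs_of_nonneg (pow_nonneg hγ0 t), mul_comm]
  exact mul_le_mul_of_nonneg_right (mg_iter_abs_le hP hμ hν t hf s) (pow_nonneg hγ0 t)

end stepOpLemmas

section stepOpLemmas2
variable {S A B : Type*} [Fintype S] [Fintype A] [Fintype B]
variable (P : S → A → B → S → ℝ) (μ : S → A → ℝ) (ν : S → B → ℝ)

lemma mg_rec (R : S → ℝ) (γ : ℝ) (n : ℕ) (s : S) :
    ∑ t ∈ Finset.range (n+1), γ ^ t * ((stepOp P μ ν)^[t] R) s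
      = R s + γ * stepOp P μ ν
          (fun s' => ∑ t ∈ Finset.range n, γ ^ t * ((stepOp P μ ν)^[t] R) s') s := by
  rw [Finset.sum_range_succ' (fun t => γ ^ t * ((stepOp P μ ν)^[t] R) s) n,
    mg_stepOp_sum P μ ν n (fun t => γ ^ t) (fun t => (stepOp P μ ν)^[t] R) s]
  simp only [pow_zero, one_mul, Function.iterate_zero_apply]
  rw [Finset.mul_sum, add_comm]
  congr 1
  refine Finset.sum_congr rfl fun t _ => ?_
  rw [Function.iterate_succ_apply']
  ring

lemma mg_stepOp_bnd_sum (γ c : ℝ) (g : S → ℝ) (n : ℕ) (s : S) :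
    stepOp P μ ν (fun s' => c * ∑ t ∈ Finset.range n, γ ^ t * ((stepOp P μ ν)^[t] g) s') s
      = c * ∑ t ∈ Finset.range n, γ ^ t * ((stepOp P μ ν)^[t+1] g) s := by
  have h : (fun s' => c * ∑ t ∈ Finset.range n, γ ^ t * ((stepOp P μ ν)^[t] g) s')
      = fun s' => ∑ t ∈ Finset.range n, (c * γ ^ t) * ((stepOp P μ ν)^[t] g) s' := by
    funext s'; rw [Finset.mul_sum]; exact Finset.sum_congr rfl fun t _ => by ring
  rw [h, mg_stepOp_sum P μ ν n (fun t => c * γ ^ t) (fun t => (stepOp P μ ν)^[t] g) s,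
    Finset.mul_sum]
  refine Finset.sum_congr rfl fun t _ => ?_
  rw [Function.iterate_succ_apply']
  ring

end stepOpLemmas2

lemma mg_key {S A B : Type*} [Fintype S] [Fintype A] [Fintype B]
    {γ : ℝ} (hγ0 : 0 ≤ γ) (hγ1 : γ < 1)
    {P : S → A → B → S → ℝ} (hP : ∀ s a b, IsDist (P s a b))
    {r : S → A → B → ℝ} (hr : ∀ s a b, |r s a b| ≤ 1)
    {μ : S → A → ℝ} (hμ : ∀ s, IsDist (μ s))
    {ν ν' : S → B → ℝ} (hν : ∀ s, IsDist (ν s)) (hν' : ∀ s, IsDist (ν' s)) :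
    ∀ n s, |(∑ t ∈ Finset.range n, γ ^ t * ((stepOp P μ ν)^[t] (rBar r μ ν)) s)
        - ∑ t ∈ Finset.range n, γ ^ t * ((stepOp P μ ν')^[t] (rBar r μ ν')) s|
      ≤ (2 / (1 - γ)) * ∑ t ∈ Finset.range n,
          γ ^ t * ((stepOp P μ ν)^[t] (fun s => (1/2) * ∑ b, |ν s b - ν' s b|)) s := by
  have h1γ : (0:ℝ) < 1 - γ := by linarith
  set g : S → ℝ := fun s => (1/2) * ∑ b, |ν s b - ν' s b| with hgdef
  have hRν : ∀ s, |rBar r μ ν s| ≤ 1 := fun s => mg_abs_expect2_le (hμ s) (hν s) (hr s)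
  have hRν' : ∀ s, |rBar r μ ν' s| ≤ 1 := fun s => mg_abs_expect2_le (hμ s) (hν' s) (hr s)
  intro n
  induction n with
  | zero => intro s; simp
  | succ n ih =>
    intro s
    rw [mg_rec, mg_rec]
    have hgeo : ∑ t ∈ Finset.range n, γ ^ t ≤ 1/(1-γ) := by
      have h := Summable.sum_le_tsum (Finset.range n) (fun t _ => pow_nonneg hγ0 t)
        (hf := summable_geometric_of_lt_one hγ0 hγ1)
      rwa [tsum_geometric_of_lt_one hγ0 hγ1, ← one_div] at h
    have hWb : ∀ s', |∑ t ∈ Finset.range n, γ ^ t * ((stepOp P μ ν')^[t] (rBar r μ ν')) s'|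
        ≤ 1/(1-γ) := by
      intro s'
      calc |∑ t ∈ Finset.range n, γ ^ t * ((stepOp P μ ν')^[t] (rBar r μ ν')) s'|
          ≤ ∑ t ∈ Finset.range n, |γ ^ t * ((stepOp P μ ν')^[t] (rBar r μ ν')) s'| :=
            Finset.abs_sum_le_sum_abs _ _
        _ ≤ ∑ t ∈ Finset.range n, γ ^ t := Finset.sum_le_sum fun t _ => by
            rw [abs_mul, abs_of_nonneg (pow_nonneg hγ0 t)]
            calc γ ^ t * |((stepOp P μ ν')^[t] (rBar r μ ν')) s'|
                ≤ γ ^ t * 1 := mul_le_mul_of_nonneg_left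
                  (mg_iter_abs_le hP hμ hν' t hRν' s') (pow_nonneg hγ0 t)
              _ = γ ^ t := mul_one _
        _ ≤ 1/(1-γ) := hgeo
    have hb1 : |rBar r μ ν s - rBar r μ ν' s| ≤ 2 * g s := by
      have h := mg_expect2_diff_le (hμ s) (q := ν s) (q' := ν' s)
        (f := fun a b => r s a b) (C := 1) (hr s)
      calc |rBar r μ ν s - rBar r μ ν' s| ≤ 1 * ∑ b, |ν s b - ν' s b| := h
        _ = 2 * g s := by simp only [hgdef]; ring
    have hb2 : |stepOp P μ ν (fun s' => ∑ t ∈ Finset.range n,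
          γ ^ t * ((stepOp P μ ν)^[t] (rBar r μ ν)) s') s
        - stepOp P μ ν (fun s' => ∑ t ∈ Finset.range n,
          γ ^ t * ((stepOp P μ ν')^[t] (rBar r μ ν')) s') s|
        ≤ (2/(1-γ)) * ∑ t ∈ Finset.range n, γ ^ t * ((stepOp P μ ν)^[t+1] g) s := by
      rw [← mg_stepOp_sub P μ ν
        (fun s' => ∑ t ∈ Finset.range n, γ ^ t * ((stepOp P μ ν)^[t] (rBar r μ ν)) s')
        (fun s' => ∑ t ∈ Finset.range n, γ ^ t * ((stepOp P μ ν')^[t] (rBar r μ ν')) s') s]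
      refine (mg_stepOp_abs_le hP hμ hν
        (h := fun s' => (2/(1-γ)) * ∑ t ∈ Finset.range n, γ ^ t * ((stepOp P μ ν)^[t] g) s')
        ih s).trans_eq ?_
      exact mg_stepOp_bnd_sum P μ ν γ (2/(1-γ)) g n s
    have hb3 : |stepOp P μ ν (fun s' => ∑ t ∈ Finset.range n,
          γ ^ t * ((stepOp P μ ν')^[t] (rBar r μ ν')) s') s
        - stepOp P μ ν' (fun s' => ∑ t ∈ Finset.range n,
          γ ^ t * ((stepOp P μ ν')^[t] (rBar r μ ν')) s') s|
        ≤ (1/(1-γ)) * (2 * g s) := by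
      have h := mg_expect2_diff_le (hμ s) (q := ν s) (q' := ν' s)
        (f := fun a b => ∑ s', P s a b s' * ∑ t ∈ Finset.range n,
          γ ^ t * ((stepOp P μ ν')^[t] (rBar r μ ν')) s')
        (C := 1/(1-γ)) (fun a b => mg_abs_expect_le (hP s a b) hWb)
      calc |stepOp P μ ν (fun s' => ∑ t ∈ Finset.range n,
              γ ^ t * ((stepOp P μ ν')^[t] (rBar r μ ν')) s') s
            - stepOp P μ ν' (fun s' => ∑ t ∈ Finset.range n,
              γ ^ t * ((stepOp P μ ν')^[t] (rBar r μ ν')) s') s|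
          ≤ (1/(1-γ)) * ∑ b, |ν s b - ν' s b| := h
        _ = (1/(1-γ)) * (2 * g s) := by simp only [hgdef]; ring
    set X := rBar r μ ν s - rBar r μ ν' s with hX
    set Y := stepOp P μ ν (fun s' => ∑ t ∈ Finset.range n,
        γ ^ t * ((stepOp P μ ν)^[t] (rBar r μ ν)) s') s
      - stepOp P μ ν (fun s' => ∑ t ∈ Finset.range n,
        γ ^ t * ((stepOp P μ ν')^[t] (rBar r μ ν')) s') s with hY
    set Z := stepOp P μ ν (fun s' => ∑ t ∈ Finset.range n,
        γ ^ t * ((stepOp P μ ν')^[t] (rBar r μ ν')) s') s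
      - stepOp P μ ν' (fun s' => ∑ t ∈ Finset.range n,
        γ ^ t * ((stepOp P μ ν')^[t] (rBar r μ ν')) s') s with hZ
    have hsplit : rBar r μ ν s + γ * stepOp P μ ν (fun s' => ∑ t ∈ Finset.range n,
          γ ^ t * ((stepOp P μ ν)^[t] (rBar r μ ν)) s') s
        - (rBar r μ ν' s + γ * stepOp P μ ν' (fun s' => ∑ t ∈ Finset.range n,
          γ ^ t * ((stepOp P μ ν')^[t] (rBar r μ ν')) s') s)
        = X + γ * Y + γ * Z := by rw [hX, hY, hZ]; ring
    rw [hsplit]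
    have htri : |X + γ * Y + γ * Z| ≤ |X| + γ * |Y| + γ * |Z| := by
      calc |X + γ * Y + γ * Z| ≤ |X + γ * Y| + |γ * Z| := abs_add_le _ _
        _ ≤ |X| + |γ * Y| + |γ * Z| := by
            exact add_le_add (abs_add_le _ _) le_rfl
        _ = |X| + γ * |Y| + γ * |Z| := by
            rw [abs_mul, abs_mul, abs_of_nonneg hγ0]
    have hshift : ∑ t ∈ Finset.range (n+1), γ ^ t * ((stepOp P μ ν)^[t] g) s
        = g s + γ * ∑ t ∈ Finset.range n, γ ^ t * ((stepOp P μ ν)^[t+1] g) s := by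
      rw [Finset.sum_range_succ' (fun t => γ ^ t * ((stepOp P μ ν)^[t] g) s) n]
      simp only [pow_zero, one_mul, Function.iterate_zero_apply]
      rw [add_comm, Finset.mul_sum]
      congr 1
      exact Finset.sum_congr rfl fun t _ => by ring
    calc |X + γ * Y + γ * Z| ≤ |X| + γ * |Y| + γ * |Z| := htri
      _ ≤ (2 * g s) + γ * ((2/(1-γ)) * ∑ t ∈ Finset.range n,
            γ ^ t * ((stepOp P μ ν)^[t+1] g) s) + γ * ((1/(1-γ)) * (2 * g s)) := by
          exact add_le_add (add_le_add hb1 (mul_le_mul_of_nonneg_left hb2 hγ0))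
            (mul_le_mul_of_nonneg_left hb3 hγ0)
      _ = (2 / (1 - γ)) * ∑ t ∈ Finset.range (n+1), γ ^ t * ((stepOp P μ ν)^[t] g) s := by
          rw [hshift]
          field_simp
          ring

/-- Value difference bound via total variation of the min-player's policies. -/
theorem stmt7 {S A B : Type*} [Fintype S] [Fintype A] [Fintype B]
    (γ : ℝ) (hγ : γ ∈ Set.Ico (0:ℝ) 1)
    (P : S → A → B → S → ℝ) (hP : ∀ s a b, IsDist (P s a b))
    (r : S → A → B → ℝ) (hr : ∀ s a b, |r s a b| ≤ 1)
    (μ : S → A → ℝ) (hμ : ∀ s, IsDist (μ s))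
    (ν ν' : S → B → ℝ) (hν : ∀ s, IsDist (ν s)) (hν' : ∀ s, IsDist (ν' s))
    (s0 : S) :
    |Vval γ P r μ ν s0 - Vval γ P r μ ν' s0| ≤
      (2 / (1 - γ)) *
        ∑' t : ℕ, γ ^ t * ((stepOp P μ ν)^[t]
          (fun s => (1/2) * ∑ b, |ν s b - ν' s b|)) s0 := by
  obtain ⟨hγ0, hγ1⟩ := hγ
  have h1γ : (0:ℝ) < 1 - γ := by linarith
  set g : S → ℝ := fun s => (1/2) * ∑ b, |ν s b - ν' s b| with hgdef
  have hgnn : ∀ s, 0 ≤ g s := fun s =>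
    mul_nonneg (by norm_num) (Finset.sum_nonneg fun b _ => abs_nonneg _)
  have hg1 : ∀ s, |g s| ≤ 1 := by
    intro s
    rw [abs_of_nonneg (hgnn s)]
    have h2 : ∑ b, |ν s b - ν' s b| ≤ 2 := by
      calc ∑ b, |ν s b - ν' s b| ≤ ∑ b, (ν s b + ν' s b) :=
            Finset.sum_le_sum fun b _ => (abs_sub (ν s b) (ν' s b)).trans
              (by rw [abs_of_nonneg ((hν s).1 b), abs_of_nonneg ((hν' s).1 b)])
        _ = 2 := by rw [Finset.sum_add_distrib, (hν s).2, (hν' s).2]; norm_num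
    simp only [hgdef]
    linarith
  have hRν : ∀ s, |rBar r μ ν s| ≤ 1 := fun s => mg_abs_expect2_le (hμ s) (hν s) (hr s)
  have hRν' : ∀ s, |rBar r μ ν' s| ≤ 1 := fun s => mg_abs_expect2_le (hμ s) (hν' s) (hr s)
  have hsν : Summable (fun t : ℕ => γ ^ t * ((stepOp P μ ν)^[t] (rBar r μ ν)) s0) :=
    mg_summable hP hμ hν hγ0 hγ1 zero_le_one hRν s0
  have hsν' : Summable (fun t : ℕ => γ ^ t * ((stepOp P μ ν')^[t] (rBar r μ ν')) s0) :=
    mg_summable hP hμ hν' hγ0 hγ1 zero_le_one hRν' s0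
  have hsg : Summable (fun t : ℕ => γ ^ t * ((stepOp P μ ν)^[t] g) s0) :=
    mg_summable hP hμ hν hγ0 hγ1 zero_le_one hg1 s0
  have hlim : Filter.Tendsto (fun n =>
      |(∑ t ∈ Finset.range n, γ ^ t * ((stepOp P μ ν)^[t] (rBar r μ ν)) s0)
        - ∑ t ∈ Finset.range n, γ ^ t * ((stepOp P μ ν')^[t] (rBar r μ ν')) s0|)
      Filter.atTop (nhds |Vval γ P r μ ν s0 - Vval γ P r μ ν' s0|) :=
    ((hsν.hasSum.tendsto_sum_nat).sub (hsν'.hasSum.tendsto_sum_nat)).abs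
  refine le_of_tendsto hlim (Filter.Eventually.of_forall fun n => ?_)
  refine (mg_key hγ0 hγ1 hP hr hμ hν hν' n s0).trans ?_
  refine mul_le_mul_of_nonneg_left ?_ (div_nonneg (by norm_num) h1γ.le)
  exact Summable.sum_le_tsum (Finset.range n)
    (fun t _ => mul_nonneg (pow_nonneg hγ0 t) (mg_iter_nonneg hP hμ hν hgnn t s0)) (hf := hsg)
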